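/- Let a, b be continuous ω-periodic functions with b > 0 and A_ω(a) > 0, and for a parameter η ≥ 0 let v_η be the unique positive ω-periodic solution of v' = v(a(t) - (b(t) + η·c(t)/β(t))v), where c, β are continuous positive ω-periodic. Then v_η depends continuously on η: for every ε₀ > 0 there exists η₀ > 0 such that for all 0 < η < η₀ and all t ∈ ℝ, |v_η(t) - v_0(t)| < ε₀/2. -/

import Mathlib

open Real Function Set

/-!
The reciprocal `u_η = 1 / v_η` of a positive solution of the logistic equation solves the linear
equation `u' = -a u + b + η c / β`. A periodic solution of a linear equation whose coefficient `a`
has nonzero mean is unique, so `u_η = u_0 + η (u_1 - u_0)` depends affinely on `η`. As `u_0` is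
continuous, periodic and positive, it is bounded below by a positive constant, hence
`v_η = (u_0 + η (u_1 - u_0))⁻¹` converges to `v_0` uniformly as `η → 0`.
-/

/-- `z · exp (∫₀ᵗ a)` is constant, so `z 0 = z ω = z 0 · exp (∫₀^ω a)`. -/
theorem Function.Periodic.eq_zero_of_hasDerivAt_neg_mul {a z : ℝ → ℝ} {ω : ℝ}
    (hz : Periodic z ω) (ha : Continuous a) (haω : ∫ t in (0:ℝ)..ω, a t ≠ 0)
    (hderiv : ∀ t, HasDerivAt z (-(a t) * z t) t) : z = 0 := by
  set A : ℝ → ℝ := fun t => ∫ s in (0:ℝ)..t, a s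
  have hg : ∀ t, HasDerivAt (fun s => z s * exp (A s)) 0 t := fun t =>
    ((hderiv t).mul (ha.integral_hasStrictDerivAt 0 t).hasDerivAt.exp).congr_deriv (by ring)
  have hconst (t : ℝ) : z t * exp (A t) = z 0 := by
    simpa [A] using is_const_of_deriv_eq_zero (fun s => (hg s).differentiableAt)
      (fun s => (hg s).deriv) t 0
  have hz0 : z 0 = 0 := by
    have hAω : exp (A ω) ≠ 1 := fun h => haω (Real.exp_eq_one_iff _ |>.mp h)
    have h := hconst ω
    rw [hz.eq] at h
    have : z 0 * (exp (A ω) - 1) = 0 := by linarith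
    simpa [sub_ne_zero.mpr hAω] using this
  funext t
  simpa [hz0, (exp_pos (A t)).ne'] using hconst t

theorem hasDerivAt_inv_of_logistic {v : ℝ → ℝ} {t r k : ℝ}
    (hv : HasDerivAt v (v t * (r - k * v t)) t) (hvt : v t ≠ 0) :
    HasDerivAt (fun s => (v s)⁻¹) (-r * (v t)⁻¹ + k) t :=
  (hv.inv hvt).congr_deriv (by field_simp; ring)

theorem Function.Periodic.exists_pos_le_of_continuous {f : ℝ → ℝ} {c : ℝ} (hf : Periodic f c)
    (hc : c ≠ 0) (hcont : Continuous f) (hpos : ∀ t, 0 < f t) : ∃ m > 0, ∀ t, m ≤ f t := by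
  obtain ⟨_, ⟨t₀, rfl⟩, hleast⟩ :=
    (hf.compact_of_continuous hc hcont).exists_isLeast (range_nonempty f)
  exact ⟨f t₀, hpos t₀, fun t => hleast ⟨t, rfl⟩⟩

theorem Function.Periodic.exists_pos_abs_le_of_continuous {f : ℝ → ℝ} {c : ℝ}
    (hf : Periodic f c) (hc : c ≠ 0) (hcont : Continuous f) : ∃ H > 0, ∀ t, |f t| ≤ H := by
  obtain ⟨H, hH, hle⟩ := (hf.isBounded_of_continuous hc hcont).exists_pos_norm_le
  exact ⟨H, hH, fun t => hle _ ⟨t, rfl⟩⟩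

theorem abs_inv_add_mul_sub_inv_le {x y m H η : ℝ} (hm : 0 < m) (hx : m ≤ x) (hy : |y| ≤ H)
    (hηH : |η| * H ≤ m / 2) : |(x + η * y)⁻¹ - x⁻¹| ≤ 2 * |η| * H / m ^ 2 := by
  have hηy : |η * y| ≤ m / 2 := by
    rw [abs_mul]; exact (mul_le_mul_of_nonneg_left hy (abs_nonneg η)).trans hηH
  have hden : m / 2 ≤ x + η * y := by linarith [neg_abs_le (η * y)]
  have hx0 : 0 < x := hm.trans_le hx
  have hd0 : 0 < x + η * y := by linarith
  calc |(x + η * y)⁻¹ - x⁻¹| = |η * y| / (x * (x + η * y)) := by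
        rw [inv_sub_inv hd0.ne' hx0.ne', abs_div, abs_of_pos (by positivity : 0 < (x + η * y) * x),
          sub_add_cancel_left, abs_neg, mul_comm (x + η * y)]
    _ ≤ |η| * H / (m * (m / 2)) := by
        have : 0 ≤ H := (abs_nonneg y).trans hy
        rw [abs_mul]
        gcongr
    _ = 2 * |η| * H / m ^ 2 := by field_simp

theorem Function.Periodic.exists_forall_abs_inv_add_mul_sub_inv_lt {u h : ℝ → ℝ} {c : ℝ}
    (hu : Periodic u c) (hh : Periodic h c) (hc : c ≠ 0) (hucont : Continuous u)
    (hhcont : Continuous h) (hupos : ∀ t, 0 < u t) {ε : ℝ} (hε : 0 < ε) :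
    ∃ η₀ > 0, ∀ η, |η| < η₀ → ∀ t, |(u t + η * h t)⁻¹ - (u t)⁻¹| < ε := by
  obtain ⟨m, hm, hmu⟩ := hu.exists_pos_le_of_continuous hc hucont hupos
  obtain ⟨H, hH, hHh⟩ := hh.exists_pos_abs_le_of_continuous hc hhcont
  refine ⟨min (m / (2 * H)) (ε * m ^ 2 / (2 * H)), by positivity, fun η hη t => ?_⟩
  have hη₁ : |η| * H ≤ m / 2 := by
    have := (lt_min_iff.mp hη).1
    rw [lt_div_iff₀ (by positivity)] at this
    linarith
  have hη₂ : 2 * |η| * H / m ^ 2 < ε := by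
    have := (lt_min_iff.mp hη).2
    rw [lt_div_iff₀ (by positivity)] at this
    rw [div_lt_iff₀ (by positivity)]
    linarith
  exact (abs_inv_add_mul_sub_inv_le hm (hmu t) (hHh t) hη₁).trans_lt hη₂

theorem periodic_solution_continuity_in_parameter_general
    (ω : ℝ)
    (a b c β : ℝ → ℝ)
    (ha : Continuous a)
    (havg_a : 0 < (1 / ω) * ∫ t in (0:ℝ)..ω, a t)
    (vη : ℝ → ℝ → ℝ)
    (hsol : ∀ η : ℝ, 0 ≤ η →
      (∀ t, 0 < vη η t) ∧ (∀ t, vη η (t + ω) = vη η t) ∧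
      (∀ t, HasDerivAt (vη η)
        (vη η t * (a t - (b t + η * c t / β t) * vη η t)) t)) :
    ∀ ε₀ > (0:ℝ), ∃ η₀ > (0:ℝ), ∀ η : ℝ, 0 < η → η < η₀ →
      ∀ t : ℝ, |vη η t - vη 0 t| < ε₀ / 2 := by
  intro ε₀ hε₀
  have hω : ω ≠ 0 := by rintro rfl; simp at havg_a
  have haω : ∫ t in (0:ℝ)..ω, a t ≠ 0 := fun h => by simp [h] at havg_a
  set u : ℝ → ℝ → ℝ := fun η t => (vη η t)⁻¹
  have hu (η : ℝ) (hη : 0 ≤ η) : Periodic (u η) ω ∧ Continuous (u η) ∧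
      ∀ t, HasDerivAt (u η) (-(a t) * u η t + (b t + η * c t / β t)) t := by
    obtain ⟨hpos, hper, hderiv⟩ := hsol η hη
    have hderiv' t := hasDerivAt_inv_of_logistic (hderiv t) (hpos t).ne'
    exact ⟨fun t => by simp [u, hper t],
      continuous_iff_continuousAt.mpr fun t => (hderiv' t).continuousAt, hderiv'⟩
  obtain ⟨hu0per, hu0cont, hu0⟩ := hu 0 le_rfl
  obtain ⟨hu1per, hu1cont, hu1⟩ := hu 1 zero_le_one
  set h : ℝ → ℝ := fun t => u 1 t - u 0 t
  have hper : Periodic h ω := fun t => by simp only [h, hu0per t, hu1per t]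
  have hu_affine (η : ℝ) (hη : 0 ≤ η) : u η = fun t => u 0 t + η * h t := by
    obtain ⟨huper, -, huη⟩ := hu η hη
    have hzero := Periodic.eq_zero_of_hasDerivAt_neg_mul (z := fun t => u η t - (u 0 t + η * h t))
      (fun t => by simp only [huper t, hu0per t, hper t]) ha haω fun t =>
        ((huη t).fun_sub ((hu0 t).fun_add (((hu1 t).fun_sub (hu0 t)).const_mul η))).congr_deriv
          (by ring)
    exact funext fun t => sub_eq_zero.mp (congrFun hzero t)
  obtain ⟨η₀, hη₀, hclose⟩ := hu0per.exists_forall_abs_inv_add_mul_sub_inv_lt hper hω hu0cont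
    (hu1cont.sub hu0cont) (fun t => inv_pos.mpr ((hsol 0 le_rfl).1 t)) (half_pos hε₀)
  refine ⟨η₀, hη₀, fun η hη hηη₀ t => ?_⟩
  have := hclose η (by rwa [abs_of_pos hη]) t
  rwa [← congrFun (hu_affine η hη.le) t, inv_inv, inv_inv] at this

/-- Continuous dependence on the parameter η of the unique positive ω-periodic
solution of the perturbed logistic equation. -/
theorem periodic_solution_continuity_in_parameter
    (ω : ℝ) (hω : 0 < ω)
    (a b c β : ℝ → ℝ)
    (ha : Continuous a) (hb : Continuous b) (hc : Continuous c)
    (hβ : Continuous β)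
    (haper : ∀ t, a (t + ω) = a t) (hbper : ∀ t, b (t + ω) = b t)
    (hcper : ∀ t, c (t + ω) = c t) (hβper : ∀ t, β (t + ω) = β t)
    (hbpos : ∀ t, 0 < b t) (hcpos : ∀ t, 0 < c t) (hβpos : ∀ t, 0 < β t)
    (havg_a : 0 < (1 / ω) * ∫ t in (0:ℝ)..ω, a t)
    (vη : ℝ → ℝ → ℝ)
    (hsol : ∀ η : ℝ, 0 ≤ η →
      (∀ t, 0 < vη η t) ∧ (∀ t, vη η (t + ω) = vη η t) ∧
      (∀ t, HasDerivAt (vη η)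
        (vη η t * (a t - (b t + η * c t / β t) * vη η t)) t))
    (huniq : ∀ η : ℝ, 0 ≤ η → ∀ w : ℝ → ℝ,
      (∀ t, 0 < w t) → (∀ t, w (t + ω) = w t) →
      (∀ t, HasDerivAt w (w t * (a t - (b t + η * c t / β t) * w t)) t) →
      w = vη η) :
    ∀ ε₀ > (0:ℝ), ∃ η₀ > (0:ℝ), ∀ η : ℝ, 0 < η → η < η₀ →
      ∀ t : ℝ, |vη η t - vη 0 t| < ε₀ / 2 :=
  periodic_solution_continuity_in_parameter_general ω a b c β ha havg_a vη hsol
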